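/- arXiv:1401.6519 — 2 statements merged into one kernel-verified Lean document; each statement's English description precedes it below -/
import Mathlib

section
/- Every GO-space (a subspace of a linearly ordered topological space) is radial. -/
open Filter Topology Set

universe u v

/-- `X` is radial at `x`: every set with `x` in its closure contains a transfinite
sequence (an ordinal-indexed net, with nonempty domain) converging to `x`. -/
def RadialAt {X : Type u} [TopologicalSpace X] (x : X) : Prop :=
  ∀ A : Set X, x ∈ closure A →
    ∃ o : Ordinal.{u}, o ≠ 0 ∧ ∃ f : o.ToType → X,
      (∀ a, f a ∈ A) ∧ Filter.Tendsto f Filter.atTop (nhds x)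

/-
Split `A` at `x` along the embedding `e : X → L`. By symmetry `x` lies in the closure of the part
`B` below `x`. Every linear order has a well-ordered cofinal subset; applied to `B` (ordered via
`e`) this is a strictly increasing ordinal-indexed net in `B` which is cofinal in `B`. Its
`e`-image increases to the least upper bound of `e '' B`, which is `e x` because `e x` is an upper
bound lying in the closure of `e '' B`; as `e` is an embedding, the net converges to `x`.
-/

theorem exists_isCofinal_wellFoundedLT (α : Type*) [LinearOrder α] :
    ∃ s : Set α, IsCofinal s ∧ WellFoundedLT s := by
  let r : α → α → Prop := WellOrderingRel
  refine ⟨{a | ∀ b, r b a → b < a}, isCofinal_setOfPred_imp_lt r, ⟨?_⟩⟩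
  -- On this set `<` is contained in the well-order `r`.
  refine Subrelation.wf (r := InvImage r Subtype.val) (fun {a b} hab => ?_)
    (InvImage.wf _ WellOrderingRel.isWellOrder.wf)
  rcases trichotomous_of r a.1 b.1 with h | h | h
  · exact h
  · exact absurd (Subtype.ext h ▸ hab) (lt_irrefl _)
  · exact absurd (a.2 b.1 h) hab.asymm

open scoped Ordinal in
theorem exists_strictMono_ordinal_isCofinal_range (α : Type u) [LinearOrder α] :
    ∃ o : Ordinal.{u}, ∃ f : o.ToType → α, StrictMono f ∧ IsCofinal (range f) := by
  obtain ⟨s, hs, _⟩ := exists_isCofinal_wellFoundedLT α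
  obtain ⟨iso⟩ := Ordinal.type_eq.1 (Ordinal.type_toType (typeLT s))
  let g : (typeLT s).ToType ≃o s := OrderIso.ofRelIsoLT iso
  refine ⟨_, Subtype.val ∘ g, (Subtype.strictMono_coe _).comp g.strictMono, ?_⟩
  rwa [g.surjective.range_comp, Subtype.range_coe]

def ExistsOrdinalNetTendsto {X : Type u} [TopologicalSpace X] (A : Set X) (x : X) : Prop :=
  ∃ o : Ordinal.{u}, o ≠ 0 ∧ ∃ f : o.ToType → X, (∀ a, f a ∈ A) ∧ Tendsto f atTop (𝓝 x)

theorem ExistsOrdinalNetTendsto.mono {X : Type u} [TopologicalSpace X] {A B : Set X} {x : X}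
    (h : ExistsOrdinalNetTendsto A x) (hAB : A ⊆ B) : ExistsOrdinalNetTendsto B x :=
  let ⟨o, ho, f, hfA, hf⟩ := h
  ⟨o, ho, f, fun a => hAB (hfA a), hf⟩

theorem existsOrdinalNetTendsto_of_forall_le {X : Type u} [TopologicalSpace X] {L : Type v}
    [LinearOrder L] [TopologicalSpace L] [OrderTopology L] {e : X → L} (he : IsEmbedding e)
    {A : Set X} {x : X} (hA : ∀ a ∈ A, e a ≤ e x) (hx : x ∈ closure A) :
    ExistsOrdinalNetTendsto A x := by
  let _ : LinearOrder A :=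
    LinearOrder.lift' (e ∘ Subtype.val) (he.injective.comp Subtype.val_injective)
  obtain ⟨o, f, hf, hcof⟩ := exists_strictMono_ordinal_isCofinal_range A
  obtain ⟨a, ha⟩ := closure_nonempty_iff.mp ⟨x, hx⟩
  obtain ⟨-, ⟨i, -⟩, -⟩ := hcof ⟨a, ha⟩
  refine ⟨o, Ordinal.nonempty_toType_iff.mp ⟨i⟩, fun i => f i, fun i => (f i).2, ?_⟩
  have hlub : IsLUB (e '' A) (e x) :=
    isLUB_of_mem_closure (forall_mem_image.2 hA) (mem_closure_image he.continuous.continuousAt hx)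
  rw [he.tendsto_nhds_iff]
  refine tendsto_atTop_isLUB (fun i j hij => hf.monotone hij) (hlub.of_isCofinalFor ?_ ?_)
  · rintro _ ⟨i, rfl⟩
    exact mem_image_of_mem e (f i).2
  · rintro _ ⟨b, hb, rfl⟩
    obtain ⟨_, ⟨j, rfl⟩, hj⟩ := hcof ⟨b, hb⟩
    exact ⟨_, mem_range_self j, hj⟩

/-- Corollary 3.7 + Theorem 3.9: every GO-space (a space embedding in a linearly
ordered topological space) is radial. -/
theorem stmt_10 {X : Type u} [TopologicalSpace X] {L : Type v} [LinearOrder L]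
    [TopologicalSpace L] [OrderTopology L] (e : X → L)
    (he : Topology.IsEmbedding e) :
    ∀ x : X, RadialAt x := by
  intro x A hx
  have hsplit : A = {a ∈ A | e a ≤ e x} ∪ {a ∈ A | e x ≤ e a} := by
    ext a
    simp only [mem_union, mem_ofPred_eq, ← and_or_left, le_total, and_true]
  rw [hsplit, closure_union] at hx
  rcases hx with hx | hx
  · exact (existsOrdinalNetTendsto_of_forall_le he (fun a ha => ha.2) hx).mono
      (sep_subset _ _)
  · exact (existsOrdinalNetTendsto_of_forall_le (L := Lᵒᵈ) (e := OrderDual.toDual ∘ e) he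
      (fun a ha => ha.2) hx).mono (sep_subset _ _)
end

section
/- Let X be a space radial at x. Then x admits a spoke system (S_i)_{i∈I} (each S_i containing N_x, well-based at x, and unions of S_i-neighbourhoods of x forming a neighbourhood base at x in X) such that additionally, for all distinct i, j ∈ I, x is not in the closure of (S_i ∩ S_j) ∖ N_x. -/
open Filter Topology Set

universe u v

/-- The neighbourhood core of `x`: the intersection of all neighbourhoods of `x`. -/
def NbhdCore {X : Type u} [TopologicalSpace X] (x : X) : Set X :=
  ⋂₀ {U | U ∈ nhds x}

/-- A set `U ⊆ S` is a neighbourhood of `x` in the subspace `S` iff `U ∈ 𝓝[S] x`.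
`S` is well-based at `x` if `x` has a neighbourhood base in the subspace `S`
well-ordered by reverse inclusion. -/
def WellBasedWithin {X : Type u} [TopologicalSpace X] (x : X) (S : Set X) : Prop :=
  ∃ B : Set (Set X),
    (∀ b ∈ B, b ⊆ S ∧ b ∈ nhdsWithin x S) ∧
    (∀ U, U ⊆ S → U ∈ nhdsWithin x S → ∃ b ∈ B, b ⊆ U) ∧
    IsChain (· ⊆ ·) B ∧ B.WellFoundedOn (fun a b => b ⊂ a)

/-- A spoke system for `x`: a nonempty family of subspaces, each containing the
neighbourhood core and well-based at `x`, such that the unions of subspace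
neighbourhoods of `x` form a neighbourhood base at `x`. -/
def IsSpokeSystem {X : Type u} [TopologicalSpace X] {I : Type v} (x : X)
    (S : I → Set X) : Prop :=
  Nonempty I ∧
  (∀ i, NbhdCore x ⊆ S i) ∧
  (∀ i, x ∈ S i) ∧
  (∀ i, WellBasedWithin x (S i)) ∧
  (∀ U : I → Set X, (∀ i, U i ⊆ S i ∧ U i ∈ nhdsWithin x (S i)) →
    (⋃ i, U i) ∈ nhds x) ∧
  (∀ V ∈ nhds x, ∃ U : I → Set X,
    (∀ i, U i ⊆ S i ∧ U i ∈ nhdsWithin x (S i)) ∧ (⋃ i, U i) ⊆ V)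

/-- An independent spoke system: distinct spokes meet exactly in the
neighbourhood core. -/
def IsIndepSpokeSystem {X : Type u} [TopologicalSpace X] {I : Type v} (x : X)
    (S : I → Set X) : Prop :=
  IsSpokeSystem x S ∧ ∀ i j : I, i ≠ j → S i ∩ S j = NbhdCore x

/-- `X` is strongly Fréchet at `x`. -/
def StronglyFrechetAt {X : Type u} [TopologicalSpace X] (x : X) : Prop :=
  ∀ A : ℕ → Set X, Antitone A → (∀ n, x ∈ closure (A n)) →
    ∃ u : ℕ → X, (∀ n, u n ∈ A n) ∧ Filter.Tendsto u Filter.atTop (nhds x)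

/-- `X` is first-countable at `x`: `x` has a countable neighbourhood base. -/
def FirstCountableAt {X : Type u} [TopologicalSpace X] (x : X) : Prop :=
  ∃ B : Set (Set X), B.Countable ∧ (∀ b ∈ B, b ∈ nhds x) ∧
    ∀ U ∈ nhds x, ∃ b ∈ B, b ⊆ U

/-!
Take, by Zorn's lemma, a maximal family of spokes (sets containing `N_x` and well-based at `x`)
whose pairwise intersections do not accumulate at `x` outside `N_x`. If some union `⋃ U_S` of
spoke-neighbourhoods were not a neighbourhood of `x`, its complement `A` would accumulate at `x`.
Let `f` be a net into `A` converging to `x` of least possible length `κ`. A net into a set `s ⊆ A`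
takes each value only on a bounded set of indices (otherwise that value lies in `N_x`), so its
length has cofinality at most `#s`; shortening it to its cofinality shows `#s ≥ card κ`. Hence no
initial segment of `f` accumulates at `x`, which makes `T = N_x ∪ range f` well-based at `x`. This
new spoke meets every old spoke `S` outside `N_x` only in `S \ U_S`, so maximality puts `T` in the
family; but `T ∩ A ⊆ T \ U_T` accumulates at `x`.
-/

open Ordinal Cardinal

section NbhdCore

variable {X : Type u} [TopologicalSpace X] {x : X}

theorem mem_nbhdCore_self : x ∈ NbhdCore x := fun _ hW => mem_of_mem_nhds hW

theorem nbhdCore_subset_of_mem_nhds {W : Set X} (hW : W ∈ 𝓝 x) : NbhdCore x ⊆ W :=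
  sInter_subset_of_mem hW

theorem nbhdCore_subset_of_mem_nhdsWithin {S U : Set X} (hS : NbhdCore x ⊆ S)
    (hU : U ∈ 𝓝[S] x) : NbhdCore x ⊆ U := by
  obtain ⟨W, hW, hWU⟩ := mem_nhdsWithin_iff_exists_mem_nhds_inter.1 hU
  exact fun y hy => hWU ⟨nbhdCore_subset_of_mem_nhds hW hy, hS hy⟩

theorem mem_nbhdCore_of_frequently_eq {ι : Type*} {l : Filter ι} {g : ι → X}
    (hg : Tendsto g l (𝓝 x)) {d : X} (hd : ∃ᶠ i in l, g i = d) : d ∈ NbhdCore x := fun W hW => by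
  obtain ⟨i, hid, hiW⟩ := (hd.and_eventually (hg hW)).exists
  exact hid ▸ hiW

theorem wellBasedWithin_nbhdCore : WellBasedWithin x (NbhdCore x) := by
  refine ⟨{NbhdCore x}, ?_, fun U _ hU => ⟨_, rfl, ?_⟩, IsChain.singleton,
    wellFoundedOn_singleton⟩
  · simpa using self_mem_nhdsWithin
  · exact nbhdCore_subset_of_mem_nhdsWithin subset_rfl hU

theorem notMem_closure_diff_of_mem_nhdsWithin {S U : Set X} (hU : U ∈ 𝓝[S] x) :
    x ∉ closure (S \ U) := by
  rw [notMem_closure_iff_nhdsWithin_eq_bot, ← empty_mem_iff_bot]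
  filter_upwards [nhdsWithin_mono _ sdiff_subset hU, self_mem_nhdsWithin] with y hyU hy
  exact hy.2 hyU

theorem cof_le_mk_range_of_tendsto {ι : Type u} [LinearOrder ι] {g : ι → X}
    (hg : Tendsto g atTop (𝓝 x)) (hN : ∀ i, g i ∉ NbhdCore x) : Order.cof ι ≤ #(range g) := by
  have hbounded : ∀ d : range g, ∃ b, ∀ a, g a = d → a < b := by
    rintro ⟨_, i, rfl⟩
    have : Nonempty ι := ⟨i⟩
    have hev : ∀ᶠ a in atTop, g a ≠ g i :=
      not_frequently.1 fun h => hN i (mem_nbhdCore_of_frequently_eq hg h)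
    obtain ⟨b, hb⟩ := hev.exists_forall_of_atTop
    exact ⟨b, fun a ha => lt_of_not_ge fun hba => hb a hba ha⟩
  choose b hb using hbounded
  calc Order.cof ι ≤ #(range b) :=
        Order.cof_le fun a => ⟨b ⟨g a, a, rfl⟩, mem_range_self _, (hb _ a rfl).le⟩
    _ ≤ #(range g) := mk_range_le

end NbhdCore

def NetInto {X : Type u} [TopologicalSpace X] (x : X) (A : Set X) (o : Ordinal.{u}) : Prop :=
  o ≠ 0 ∧ ∃ f : o.ToType → X, (∀ a, f a ∈ A) ∧ Tendsto f atTop (𝓝 x)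

section NetInto

variable {X : Type u} [TopologicalSpace X] {x : X} {A : Set X}

theorem NetInto.ord_cof {o : Ordinal.{u}} (h : NetInto x A o) : NetInto x A o.cof.ord := by
  obtain ⟨ho, f, hfA, hf⟩ := h
  obtain ⟨s, hs, hst⟩ := exists_ord_cof_eq o.ToType
  rw [cof_toType, ← type_toType o.cof.ord] at hst
  obtain ⟨e⟩ := type_eq.1 hst
  have hs_tendsto : Tendsto ((↑) : s → o.ToType) atTop atTop :=
    tendsto_atTop_atTop_of_monotone (fun _ _ h => h) fun a =>
      let ⟨b, hb, hab⟩ := hs a; ⟨⟨b, hb⟩, hab⟩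
  refine ⟨by simpa using ho, fun a => f (OrderIso.ofRelIsoLT e.symm a), fun a => hfA _,
    hf.comp (hs_tendsto.comp (OrderIso.ofRelIsoLT e.symm).tendsto_atTop)⟩

theorem exists_isLeast_netInto (h : RadialAt x) (hA : x ∈ closure A) :
    ∃ κ, IsLeast {o | NetInto x A o} κ :=
  ⟨_, isLeast_csInf (h A hA)⟩

theorem card_le_cof_of_isLeast_netInto {κ o : Ordinal.{u}} (hκ : IsLeast {o | NetInto x A o} κ)
    (ho : NetInto x A o) : κ.card ≤ o.cof := by
  simpa using card_le_card (hκ.2 ho.ord_cof)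

theorem mk_Iio_lt_card_of_isLeast_netInto {κ : Ordinal.{u}} (hκ : IsLeast {o | NetInto x A o} κ)
    (a : κ.ToType) : #(Iio a) < κ.card := by
  have hκ_ord : κ.card.ord = κ :=
    (ord_card_le κ).antisymm ((hκ.2 hκ.1.ord_cof).trans (ord_le_ord.2 (cof_le_card κ)))
  simpa using mk_Iio_lt a (by simpa using hκ_ord)

theorem notMem_closure_of_mk_lt_card (h : RadialAt x) (hAN : ∀ a ∈ A, a ∉ NbhdCore x)
    {κ : Ordinal.{u}} (hκ : IsLeast {o | NetInto x A o} κ) {s : Set X} (hsA : s ⊆ A)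
    (hs : #s < κ.card) : x ∉ closure s := by
  intro hx
  obtain ⟨μ, hμ, g, hgs, hg⟩ := h s hx
  have hcof : μ.cof ≤ #s := by
    rw [← cof_toType]
    exact (cof_le_mk_range_of_tendsto hg fun a => hAN _ (hsA (hgs a))).trans
      (mk_le_mk_of_subset (range_subset_iff.2 hgs))
  have hκμ : κ.card ≤ μ.cof :=
    card_le_cof_of_isLeast_netInto hκ ⟨hμ, g, fun a => hsA (hgs a), hg⟩
  exact (hs.trans_le (hκμ.trans hcof)).false

end NetInto

section Spokes

variable {X : Type u} [TopologicalSpace X] {x : X}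

theorem wellBasedWithin_nbhdCore_union_range {ι : Type*} [LinearOrder ι] [WellFoundedLT ι]
    [Nonempty ι] {f : ι → X} (hf : Tendsto f atTop (𝓝 x))
    (hsmall : ∀ a, x ∉ closure (f '' Iio a)) :
    WellBasedWithin x (NbhdCore x ∪ range f) := by
  set V : ι → Set X := fun a => NbhdCore x ∪ f '' Ici a
  have hVT : ∀ a, V a ⊆ NbhdCore x ∪ range f := fun a =>
    union_subset_union_right _ (image_subset_range _ _)
  have hV : Antitone V := fun a b hab =>
    union_subset_union_right _ (image_mono (Ici_subset_Ici.2 hab))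
  refine ⟨range V, ?_, ?_, hV.isChain_range, ?_⟩
  · rintro _ ⟨a, rfl⟩
    refine ⟨hVT a, mem_nhdsWithin_iff_exists_mem_nhds_inter.2
      ⟨_, isClosed_closure.isOpen_compl.mem_nhds (hsmall a), ?_⟩⟩
    rintro y ⟨hy, hyN | ⟨b, rfl⟩⟩
    · exact Or.inl hyN
    · exact Or.inr ⟨b, le_of_not_gt fun hba => hy (subset_closure ⟨b, hba, rfl⟩), rfl⟩
  · intro U _ hU
    obtain ⟨W, hW, hWU⟩ := mem_nhdsWithin_iff_exists_mem_nhds_inter.1 hU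
    obtain ⟨a, ha⟩ := (hf.eventually_mem hW).exists_forall_of_atTop
    refine ⟨V a, mem_range_self a, fun y hy => hWU ⟨?_, hVT a hy⟩⟩
    rcases hy with hyN | ⟨b, hab, rfl⟩
    · exact nbhdCore_subset_of_mem_nhds hW hyN
    · exact ha b hab
  · rw [wellFoundedOn_range]
    exact Subrelation.wf (fun {a b} hab => lt_of_not_ge fun hba => hab.not_subset (hV hba))
      wellFounded_lt

theorem exists_wellBasedWithin_of_radialAt (h : RadialAt x) {A : Set X}
    (hAN : ∀ a ∈ A, a ∉ NbhdCore x) (hA : x ∈ closure A) :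
    ∃ T, NbhdCore x ⊆ T ∧ T ⊆ NbhdCore x ∪ A ∧ WellBasedWithin x T ∧ x ∈ closure (T ∩ A) := by
  obtain ⟨κ, hκ⟩ := exists_isLeast_netInto h hA
  obtain ⟨hκ0, f, hfA, hf⟩ := hκ.1
  have : Nonempty κ.ToType := nonempty_toType_iff.2 hκ0
  have hsmall : ∀ a, x ∉ closure (f '' Iio a) := fun a =>
    notMem_closure_of_mk_lt_card h hAN hκ (image_subset_iff.2 fun b _ => hfA b)
      (mk_image_le.trans_lt (mk_Iio_lt_card_of_isLeast_netInto hκ a))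
  exact ⟨NbhdCore x ∪ range f, subset_union_left,
    union_subset_union_right _ (range_subset_iff.2 hfA),
    wellBasedWithin_nbhdCore_union_range hf hsmall,
    mem_closure_of_tendsto hf (Eventually.of_forall fun a => ⟨Or.inr (mem_range_self a), hfA a⟩)⟩

end Spokes

def IsSpokeFamily {X : Type u} [TopologicalSpace X] (x : X) (𝒮 : Set (Set X)) : Prop :=
  (∀ S ∈ 𝒮, NbhdCore x ⊆ S ∧ WellBasedWithin x S) ∧
    𝒮.Pairwise fun S S' => x ∉ closure ((S ∩ S') \ NbhdCore x)

section SpokeFamily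

variable {X : Type u} [TopologicalSpace X] {x : X}

theorem exists_maximal_isSpokeFamily :
    ∃ 𝒮, NbhdCore x ∈ 𝒮 ∧ Maximal (IsSpokeFamily x) 𝒮 := by
  have hN : IsSpokeFamily x {NbhdCore x} :=
    ⟨by simpa using wellBasedWithin_nbhdCore, pairwise_singleton _ _⟩
  obtain ⟨𝒮, hN𝒮, h𝒮⟩ := zorn_subset_nonempty {𝒮 | IsSpokeFamily x 𝒮}
    (fun c hc hchain _ => ⟨⋃₀ c,
      ⟨fun S ⟨t, htc, hSt⟩ => (hc htc).1 S hSt,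
        (pairwise_sUnion hchain.directedOn).2 fun t htc => (hc htc).2⟩,
      fun _ => subset_sUnion_of_mem⟩) _ hN
  exact ⟨𝒮, hN𝒮 rfl, h𝒮⟩

theorem iUnion_mem_nhds_of_maximal_isSpokeFamily (h : RadialAt x) {𝒮 : Set (Set X)}
    (h𝒮 : Maximal (IsSpokeFamily x) 𝒮) (hne : 𝒮.Nonempty) {U : 𝒮 → Set X}
    (hU : ∀ S : 𝒮, U S ∈ 𝓝[S] x) : ⋃ S, U S ∈ 𝓝 x := by
  by_contra hUx
  set A := (⋃ S, U S)ᶜ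
  have hA : x ∈ closure A := by
    rwa [closure_compl, mem_compl_iff, mem_interior_iff_mem_nhds]
  have hAN : ∀ a ∈ A, a ∉ NbhdCore x := fun a ha haN =>
    ha (mem_iUnion.2 ⟨⟨_, hne.some_mem⟩,
      nbhdCore_subset_of_mem_nhdsWithin (h𝒮.1.1 _ hne.some_mem).1 (hU _) haN⟩)
  have hsparse : ∀ S ∈ 𝒮, x ∉ closure (S ∩ A) := fun S hS hx =>
    notMem_closure_diff_of_mem_nhdsWithin (hU ⟨S, hS⟩) <| closure_mono (t := S \ U ⟨S, hS⟩)
      (fun _ hy => ⟨hy.1, fun hyU => hy.2 (mem_iUnion.2 ⟨_, hyU⟩)⟩) hx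
  obtain ⟨T, hNT, hTA, hT, hTcl⟩ := exists_wellBasedWithin_of_radialAt h hAN hA
  have hTS : ∀ S ∈ 𝒮, x ∉ closure ((T ∩ S) \ NbhdCore x) := fun S hS hx =>
    hsparse S hS <| closure_mono (t := S ∩ A)
      (fun _ hy => ⟨hy.1.2, (hTA hy.1.1).resolve_left hy.2⟩) hx
  have hT𝒮 : T ∈ 𝒮 := h𝒮.mem_of_prop_insert
    ⟨forall_mem_insert.2 ⟨⟨hNT, hT⟩, h𝒮.1.1⟩,
      pairwise_insert.2 ⟨h𝒮.1.2, fun S hS _ => ⟨hTS S hS, inter_comm S T ▸ hTS S hS⟩⟩⟩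
  exact hsparse T hT𝒮 (inter_comm T A ▸ hTcl)

theorem isSpokeSystem_of_maximal_isSpokeFamily (h : RadialAt x) {𝒮 : Set (Set X)}
    (h𝒮 : Maximal (IsSpokeFamily x) 𝒮) (hne : 𝒮.Nonempty) :
    IsSpokeSystem x ((↑) : 𝒮 → Set X) :=
  ⟨hne.to_subtype, fun S => (h𝒮.1.1 S S.2).1, fun S => (h𝒮.1.1 S S.2).1 mem_nbhdCore_self,
    fun S => (h𝒮.1.1 S S.2).2,
    fun _ hU => iUnion_mem_nhds_of_maximal_isSpokeFamily h h𝒮 hne fun S => (hU S).2,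
    fun V hV => ⟨fun S => S ∩ V, fun _ => ⟨inter_subset_left, inter_mem_nhdsWithin _ hV⟩,
      iUnion_subset fun _ => inter_subset_right⟩⟩

end SpokeFamily

/-- If `X` is radial at `x`, then `x` admits a spoke system `(S i)` such that for
all distinct `i, j`, `x` is not in the closure of `(S i ∩ S j) \ N_x`. -/
theorem stmt_12 {X : Type u} [TopologicalSpace X] (x : X) (h : RadialAt x) :
    ∃ (I : Type u) (S : I → Set X), IsSpokeSystem x S ∧
      ∀ i j : I, i ≠ j → x ∉ closure ((S i ∩ S j) \ NbhdCore x) := by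
  obtain ⟨𝒮, hN𝒮, h𝒮⟩ := exists_maximal_isSpokeFamily (x := x)
  exact ⟨𝒮, (↑), isSpokeSystem_of_maximal_isSpokeFamily h h𝒮 ⟨_, hN𝒮⟩,
    fun S S' hne => h𝒮.1.2 S.2 S'.2 (Subtype.coe_ne_coe.2 hne)⟩
end
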